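/- arXiv:1907.03279 — 3 statements merged into one kernel-verified Lean document; each statement's English description precedes it below -/
import Mathlib

section
/- Consider the Euler–Lagrange system M(q)q̈ + C(q,q̇)q̇ + Dq̇ + G(q) = τ with M(q) symmetric positive definite, D symmetric positive semidefinite, the skew-symmetry property q̇ᵀ(½Ṁ(q) − C(q,q̇))q̇ = 0, and the control τ = psat(u, q̇) where u = G(q) − K_p q − K_d q̇ with K_p, K_d symmetric positive definite. Then the function V(q,q̇) = ½ q̇ᵀM(q)q̇ + ½ qᵀK_p q satisfies V̇ ≤ −q̇ᵀ(K_d + D)q̇ along system trajectories, where psat applies componentwise power saturation satisfying q̇ᵢ·psatᵢ ≤ q̇ᵢ·uᵢ componentwise when saturating. -/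
/-!
Along a trajectory, `d/dt (½ q̇ᵀMq̇) = q̇ᵀMq̈ + ½ q̇ᵀṀq̇`; substituting the dynamics for `Mq̈` and
using the skew-symmetry of `Ṁ − 2C` leaves the supplied power `q̇ᵀ(τ − Dq̇ − G)`. The potential
`½ qᵀK_p q` contributes `q̇ᵀK_p q`. Saturation only lowers the supplied power, `q̇ᵀτ ≤ q̇ᵀu`, and for
`u = G − K_p q − K_d q̇` the gravity and spring terms cancel, leaving `−q̇ᵀ(K_d + D)q̇`.
-/

open Matrix

theorem Matrix.IsSymm.dotProduct_mulVec_comm {ι R : Type*} [Fintype ι] [CommSemiring R]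
    {A : Matrix ι ι R} (hA : A.IsSymm) (x y : ι → R) : x ⬝ᵥ A *ᵥ y = y ⬝ᵥ A *ᵥ x := by
  rw [dotProduct_mulVec, ← mulVec_transpose, hA.eq, dotProduct_comm]

section Calculus

variable {m ι : Type*} [Fintype ι] {t : ℝ}

theorem HasDerivAt.dotProduct {x y : ℝ → ι → ℝ} {x' y' : ι → ℝ}
    (hx : HasDerivAt x x' t) (hy : HasDerivAt y y' t) :
    HasDerivAt (fun s => x s ⬝ᵥ y s) (x' ⬝ᵥ y t + x t ⬝ᵥ y') t := by
  simp only [_root_.dotProduct, ← Finset.sum_add_distrib]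
  exact HasDerivAt.fun_sum fun i _ => (hasDerivAt_pi.mp hx i).fun_mul (hasDerivAt_pi.mp hy i)

theorem HasDerivAt.mulVec {A : ℝ → Matrix m ι ℝ} {A' : Matrix m ι ℝ} {y : ℝ → ι → ℝ}
    {y' : ι → ℝ} (hA : ∀ i j, HasDerivAt (fun s => A s i j) (A' i j) t)
    (hy : HasDerivAt y y' t) :
    HasDerivAt (fun s => A s *ᵥ y s) (A' *ᵥ y t + A t *ᵥ y') t :=
  hasDerivAt_pi.mpr fun i => (hasDerivAt_pi.mpr (hA i)).dotProduct hy

theorem HasDerivAt.half_dotProduct_mulVec_self {A : ℝ → Matrix ι ι ℝ} {A' : Matrix ι ι ℝ}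
    {x : ℝ → ι → ℝ} {x' : ι → ℝ} (hA : ∀ i j, HasDerivAt (fun s => A s i j) (A' i j) t)
    (hAt : (A t).IsSymm) (hx : HasDerivAt x x' t) :
    HasDerivAt (fun s => 1 / 2 * (x s ⬝ᵥ A s *ᵥ x s))
      (x t ⬝ᵥ A t *ᵥ x' + 1 / 2 * (x t ⬝ᵥ A' *ᵥ x t)) t := by
  refine ((hx.dotProduct (hx.mulVec hA)).const_mul (1 / 2)).congr_deriv ?_
  rw [dotProduct_add, hAt.dotProduct_mulVec_comm x']
  ring

theorem HasDerivAt.half_dotProduct_const_mulVec_self {A : Matrix ι ι ℝ} (hA : A.IsSymm)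
    {x : ℝ → ι → ℝ} {x' : ι → ℝ} (hx : HasDerivAt x x' t) :
    HasDerivAt (fun s => 1 / 2 * (x s ⬝ᵥ A *ᵥ x s)) (x' ⬝ᵥ A *ᵥ x t) t := by
  refine (HasDerivAt.half_dotProduct_mulVec_self (A' := 0) (fun i j => hasDerivAt_const t (A i j))
    hA hx).congr_deriv ?_
  rw [zero_mulVec, dotProduct_zero, hA.dotProduct_mulVec_comm]
  ring

theorem hasDerivAt_half_dotProduct_mulVec_self_eq_power {M : ℝ → Matrix ι ι ℝ}
    {M' C : Matrix ι ι ℝ} {v : ℝ → ι → ℝ} {a f : ι → ℝ}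
    (hM : ∀ i j, HasDerivAt (fun s => M s i j) (M' i j) t) (hMt : (M t).IsSymm)
    (hv : HasDerivAt v a t) (hskew : v t ⬝ᵥ ((1 / 2 : ℝ) • M' - C) *ᵥ v t = 0)
    (hdyn : M t *ᵥ a + C *ᵥ v t = f) :
    HasDerivAt (fun s => 1 / 2 * (v s ⬝ᵥ M s *ᵥ v s)) (v t ⬝ᵥ f) t := by
  refine (HasDerivAt.half_dotProduct_mulVec_self hM hMt hv).congr_deriv ?_
  rw [sub_mulVec, dotProduct_sub, smul_mulVec, dotProduct_smul, smul_eq_mul, sub_eq_zero] at hskew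
  rw [← hdyn, dotProduct_add, hskew]

end Calculus

theorem passivity_lyapunov_decrease_general {n : ℕ}
    (M : (Fin n → ℝ) → Matrix (Fin n) (Fin n) ℝ)
    (Cor : ℝ → Matrix (Fin n) (Fin n) ℝ)
    (D Kp Kd : Matrix (Fin n) (Fin n) ℝ)
    (G : (Fin n → ℝ) → (Fin n → ℝ))
    (q dq ddq : ℝ → Fin n → ℝ)
    (dM : ℝ → Matrix (Fin n) (Fin n) ℝ)
    (τ u : ℝ → Fin n → ℝ)
    (hMsymm : ∀ x, (M x).IsSymm)
    (hKpsymm : Kp.IsSymm)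
    (hq : ∀ t, HasDerivAt q (dq t) t)
    (hdq : ∀ t, HasDerivAt dq (ddq t) t)
    (hMt : ∀ t i j, HasDerivAt (fun s => M (q s) i j) (dM t i j) t)
    (hskew : ∀ t, dq t ⬝ᵥ ((1 / 2 : ℝ) • dM t - Cor t) *ᵥ dq t = 0)
    (hdyn : ∀ t, M (q t) *ᵥ ddq t + Cor t *ᵥ dq t + D *ᵥ dq t + G (q t) = τ t)
    (hu : ∀ t, u t = G (q t) - Kp *ᵥ q t - Kd *ᵥ dq t)
    (hpsat : ∀ t i, dq t i * τ t i ≤ dq t i * u t i)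
    (t : ℝ) :
    ∃ dV : ℝ,
      HasDerivAt
        (fun s => (1 / 2 : ℝ) * (dq s ⬝ᵥ M (q s) *ᵥ dq s)
          + (1 / 2 : ℝ) * (q s ⬝ᵥ Kp *ᵥ q s)) dV t ∧
      dV ≤ -(dq t ⬝ᵥ (Kd + D) *ᵥ dq t) := by
  have kinetic := hasDerivAt_half_dotProduct_mulVec_self_eq_power (hMt t) (hMsymm (q t)) (hdq t)
    (hskew t) (f := τ t - D *ᵥ dq t - G (q t)) (by rw [← hdyn t]; abel)
  refine ⟨_, kinetic.add (HasDerivAt.half_dotProduct_const_mulVec_self hKpsymm (hq t)), ?_⟩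
  have hsat : dq t ⬝ᵥ τ t ≤ dq t ⬝ᵥ u t := Finset.sum_le_sum fun i _ => hpsat t i
  rw [hu t] at hsat
  simp only [dotProduct_sub, add_mulVec, dotProduct_add] at hsat ⊢
  linarith

/-- Passivity-based control (PD plus gravity compensation) of an
Euler–Lagrange system under componentwise power saturation: the energy-based
Lyapunov function `V = ½ q̇ᵀM(q)q̇ + ½ qᵀK_p q` satisfies
`V̇ ≤ −q̇ᵀ(K_d + D)q̇` along system trajectories. -/
theorem passivity_lyapunov_decrease {n : ℕ}
    (M : (Fin n → ℝ) → Matrix (Fin n) (Fin n) ℝ)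
    (Cor : ℝ → Matrix (Fin n) (Fin n) ℝ)
    (D Kp Kd : Matrix (Fin n) (Fin n) ℝ)
    (G : (Fin n → ℝ) → (Fin n → ℝ))
    (q dq ddq : ℝ → Fin n → ℝ)
    (dM : ℝ → Matrix (Fin n) (Fin n) ℝ)
    (τ u : ℝ → Fin n → ℝ)
    (hMsymm : ∀ x, (M x).IsSymm) (hMpos : ∀ x, (M x).PosDef)
    (hDsymm : D.IsSymm) (hDpsd : D.PosSemidef)
    (hKpsymm : Kp.IsSymm) (hKppos : Kp.PosDef)
    (hKdsymm : Kd.IsSymm) (hKdpos : Kd.PosDef)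
    (hq : ∀ t, HasDerivAt q (dq t) t)
    (hdq : ∀ t, HasDerivAt dq (ddq t) t)
    (hMt : ∀ t i j, HasDerivAt (fun s => M (q s) i j) (dM t i j) t)
    (hskew : ∀ t, dq t ⬝ᵥ ((1 / 2 : ℝ) • dM t - Cor t) *ᵥ dq t = 0)
    (hdyn : ∀ t, M (q t) *ᵥ ddq t + Cor t *ᵥ dq t + D *ᵥ dq t + G (q t) = τ t)
    (hu : ∀ t, u t = G (q t) - Kp *ᵥ q t - Kd *ᵥ dq t)
    (hpsat : ∀ t i, dq t i * τ t i ≤ dq t i * u t i)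
    (t : ℝ) :
    ∃ dV : ℝ,
      HasDerivAt
        (fun s => (1 / 2 : ℝ) * (dq s ⬝ᵥ M (q s) *ᵥ dq s)
          + (1 / 2 : ℝ) * (q s ⬝ᵥ Kp *ᵥ q s)) dV t ∧
      dV ≤ -(dq t ⬝ᵥ (Kd + D) *ᵥ dq t) :=
  passivity_lyapunov_decrease_general M Cor D Kp Kd G q dq ddq dM τ u hMsymm hKpsymm hq hdq hMt
    hskew hdyn hu hpsat t
end

section
/- Let V(x) = xᵀQx with Q = Qᵀ > 0 be a Lyapunov function candidate for ẋ = A x + B σ(x), where for each x in a set L, σ(x) lies in the convex hull of {Π(H)x : H ∈ P} for a finite family of matrices Π(H). If for every H in the finite family, (A + BΠ(H))ᵀQ + Q(A + BΠ(H)) is negative definite, then V̇(x) = xᵀ(AᵀQ + QA)x + 2xᵀQBσ(x) < 0 for all nonzero x ∈ L. -/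
/-!
For a symmetric `Q`, the vertex Lyapunov expression for `A + BK` equals
`V̇(x) = xᵀ(AᵀQ + QA)x + 2xᵀQBu` evaluated at the input `u = Kx`. For fixed `x` this is an affine,
hence convex, function of `u`, so by the maximum principle its value at `σ(x)` is bounded by its
value at one of the vertices `Π(H)x` of the convex hull containing `σ(x)`; that value is negative.
-/

open Matrix Set

section
variable {R ι κ : Type*} [CommRing R] [Fintype ι] [Fintype κ]

theorem Matrix.dotProduct_transpose_mul_mulVec_of_isSymm {Q : Matrix ι ι R} (hQ : Q.IsSymm)
    (M : Matrix ι ι R) (x : ι → R) : x ⬝ᵥ (Mᵀ * Q) *ᵥ x = x ⬝ᵥ Q *ᵥ (M *ᵥ x) := by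
  rw [← mulVec_mulVec, dotProduct_mulVec, vecMul_transpose, dotProduct_comm,
    ← vecMul_transpose, ← dotProduct_mulVec, hQ.eq]

theorem Matrix.dotProduct_lyapunov_add_mul_mulVec {Q : Matrix ι ι R} (hQ : Q.IsSymm)
    (A : Matrix ι ι R) (B : Matrix ι κ R) (K : Matrix κ ι R) (x : ι → R) :
    x ⬝ᵥ ((A + B * K)ᵀ * Q + Q * (A + B * K)) *ᵥ x =
      x ⬝ᵥ (Aᵀ * Q + Q * A) *ᵥ x + 2 * (x ⬝ᵥ Q *ᵥ (B *ᵥ (K *ᵥ x))) := by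
  have hBK : x ⬝ᵥ ((B * K)ᵀ * Q + Q * (B * K)) *ᵥ x = 2 * (x ⬝ᵥ Q *ᵥ (B *ᵥ (K *ᵥ x))) := by
    rw [add_mulVec, dotProduct_add, dotProduct_transpose_mul_mulVec_of_isSymm hQ]
    simp only [← mulVec_mulVec, two_mul]
  rw [transpose_add, add_mul, mul_add, add_add_add_comm, add_mulVec, dotProduct_add, hBK]

end

theorem Matrix.convexOn_univ_lyapunov_derivative {𝕜 ι κ : Type*} [CommRing 𝕜] [PartialOrder 𝕜]
    [IsOrderedRing 𝕜] [Fintype ι] [Fintype κ]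
    (A Q : Matrix ι ι 𝕜) (B : Matrix ι κ 𝕜) (x : ι → 𝕜) :
    ConvexOn 𝕜 univ fun u => x ⬝ᵥ (Aᵀ * Q + Q * A) *ᵥ x + 2 * (x ⬝ᵥ Q *ᵥ (B *ᵥ u)) :=
  (convexOn_const _ convex_univ).add
    (((2 : 𝕜) • dotProductBilin 𝕜 𝕜 x ∘ₗ Q.mulVecLin ∘ₗ B.mulVecLin).convexOn convex_univ)

theorem vertex_lyapunov_decrease_general {n m : ℕ} {ι : Type*}
    (A Q : Matrix (Fin n) (Fin n) ℝ) (B : Matrix (Fin n) (Fin m) ℝ)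
    (Pim : ι → Matrix (Fin m) (Fin n) ℝ)
    (L : Set (Fin n → ℝ)) (σ : (Fin n → ℝ) → (Fin m → ℝ))
    (hQ : Q.PosDef)
    (hσ : ∀ x ∈ L, σ x ∈ convexHull ℝ (Set.range fun H : ι => (Pim H) *ᵥ x))
    (hvert : ∀ H : ι, ∀ x : Fin n → ℝ, x ≠ 0 →
      x ⬝ᵥ ((A + B * Pim H)ᵀ * Q + Q * (A + B * Pim H)) *ᵥ x < 0) :
    ∀ x ∈ L, x ≠ 0 →
      x ⬝ᵥ (Aᵀ * Q + Q * A) *ᵥ x + 2 * (x ⬝ᵥ Q *ᵥ (B *ᵥ σ x)) < 0 := by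
  intro x hxL hx0
  obtain ⟨_, ⟨H, rfl⟩, hle⟩ :=
    (convexOn_univ_lyapunov_derivative A Q B x).exists_ge_of_mem_convexHull
      (subset_univ _) (hσ x hxL)
  calc x ⬝ᵥ (Aᵀ * Q + Q * A) *ᵥ x + 2 * (x ⬝ᵥ Q *ᵥ (B *ᵥ σ x))
      ≤ x ⬝ᵥ (Aᵀ * Q + Q * A) *ᵥ x + 2 * (x ⬝ᵥ Q *ᵥ (B *ᵥ (Pim H *ᵥ x))) := hle
    _ = x ⬝ᵥ ((A + B * Pim H)ᵀ * Q + Q * (A + B * Pim H)) *ᵥ x :=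
      (dotProduct_lyapunov_add_mul_mulVec hQ.isHermitian A B (Pim H) x).symm
    _ < 0 := hvert H x hx0

/-- Vertex-based Lyapunov decrease: if `σ(x)` lies in the convex hull of the
vertices `Π(H)x` for a finite family `H ∈ P`, and every vertex closed-loop
matrix `A + BΠ(H)` satisfies a strict Lyapunov inequality with common `Q`,
then `V̇ = xᵀ(AᵀQ + QA)x + 2xᵀQBσ(x) < 0` for all nonzero `x ∈ L`. -/
theorem vertex_lyapunov_decrease {n m : ℕ} {ι : Type*} [Fintype ι] [Nonempty ι]
    (A Q : Matrix (Fin n) (Fin n) ℝ) (B : Matrix (Fin n) (Fin m) ℝ)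
    (Pim : ι → Matrix (Fin m) (Fin n) ℝ)
    (L : Set (Fin n → ℝ)) (σ : (Fin n → ℝ) → (Fin m → ℝ))
    (hQ : Q.PosDef)
    (hσ : ∀ x ∈ L, σ x ∈ convexHull ℝ (Set.range fun H : ι => (Pim H) *ᵥ x))
    (hvert : ∀ H : ι, ∀ x : Fin n → ℝ, x ≠ 0 →
      x ⬝ᵥ ((A + B * Pim H)ᵀ * Q + Q * (A + B * Pim H)) *ᵥ x < 0) :
    ∀ x ∈ L, x ≠ 0 →
      x ⬝ᵥ (Aᵀ * Q + Q * A) *ᵥ x + 2 * (x ⬝ᵥ Q *ᵥ (B *ᵥ σ x)) < 0 :=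
  vertex_lyapunov_decrease_general A Q B Pim L σ hQ hσ hvert
end

section
/- Consider the scalar linear plant m·v̇ = u − d·v (m > 0, d ≥ 0) with control u = psat(−K_p q − K_d v, v), q̇ = v, K_p > 0, K_d > 0, where psat is the lossless power saturation with limit P > 0. Then V(q,v) = ½mv² + ½K_p q² is nonincreasing along trajectories, and strictly decreasing whenever v ≠ 0. -/
/-!
Saturation can only withdraw power: `v · psat(u, v) ≤ v · u`. Hence along trajectories
`V̇ = v · psat(u, v) − d v² + K_p q v ≤ −(K_d + d) v²`, and a function with nonpositive
derivative is antitone.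
-/

/-- Lossless power saturation. -/
noncomputable def psat (P u v : ℝ) : ℝ := if u * v ≤ P then u else P / v

lemma mul_psat_le (P u v : ℝ) : v * psat P u v ≤ v * u := by
  unfold psat
  split_ifs with h
  · exact le_rfl
  · rcases eq_or_ne v 0 with rfl | hv
    · simp
    · rw [mul_div_cancel₀ _ hv]
      linarith [mul_comm u v]

lemma hasDerivAt_quadratic_energy {m k : ℝ} {q v : ℝ → ℝ} {q' v' t : ℝ}
    (hq : HasDerivAt q q' t) (hv : HasDerivAt v v' t) :
    HasDerivAt (fun t => (1 / 2) * m * (v t) ^ 2 + (1 / 2) * k * (q t) ^ 2)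
      (m * v t * v' + k * q t * q') t := by
  refine (((hv.fun_pow 2).const_mul ((1 : ℝ) / 2 * m)).add
    ((hq.fun_pow 2).const_mul ((1 : ℝ) / 2 * k))).congr_deriv ?_
  ring

lemma power_balance_psat_pd_le (d Kp Kd P q v : ℝ) :
    v * (psat P (-(Kp * q) - Kd * v) v - d * v) + Kp * q * v ≤ -(Kd + d) * v ^ 2 := by
  have := mul_psat_le P (-(Kp * q) - Kd * v) v
  nlinarith

theorem scalar_plant_energy_decrease_general (m d Kp Kd P : ℝ)
    (hm : 0 < m) (hd : 0 ≤ d) (hKd : 0 < Kd)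
    (q v : ℝ → ℝ)
    (hq : ∀ t, HasDerivAt q (v t) t)
    (hv : ∀ t, HasDerivAt v
      ((psat P (-(Kp * q t) - Kd * v t) (v t) - d * v t) / m) t) :
    let V := fun t => (1 / 2) * m * (v t) ^ 2 + (1 / 2) * Kp * (q t) ^ 2
    (∀ s t, s ≤ t → V t ≤ V s) ∧
    (∀ t, ∃ dV : ℝ, HasDerivAt V dV t ∧ dV ≤ 0 ∧ (v t ≠ 0 → dV < 0)) := by
  intro V
  set dV := fun t => v t * (psat P (-(Kp * q t) - Kd * v t) (v t) - d * v t) + Kp * q t * v t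
  have hV : ∀ t, HasDerivAt V (dV t) t := fun t => by
    convert hasDerivAt_quadratic_energy (hq t) (hv t) using 1
    simp only [dV]
    field_simp
  have hdV : ∀ t, dV t ≤ -(Kd + d) * v t ^ 2 := fun t =>
    power_balance_psat_pd_le d Kp Kd P (q t) (v t)
  have hdV_nonpos : ∀ t, dV t ≤ 0 := fun t => (hdV t).trans (by nlinarith [sq_nonneg (v t)])
  refine ⟨fun s t hst => antitone_of_hasDerivAt_nonpos hV hdV_nonpos hst,
    fun t => ⟨dV t, hV t, hdV_nonpos t, fun hvt => (hdV t).trans_lt ?_⟩⟩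
  have : 0 < v t ^ 2 := by positivity
  nlinarith

/-- For the scalar plant `m·v̇ = psat(−K_p q − K_d v, v) − d·v`, `q̇ = v`,
the energy `V = ½mv² + ½K_p q²` is nonincreasing along trajectories, and
strictly decreasing whenever `v ≠ 0`. -/
theorem scalar_plant_energy_decrease (m d Kp Kd P : ℝ)
    (hm : 0 < m) (hd : 0 ≤ d) (hKp : 0 < Kp) (hKd : 0 < Kd) (hP : 0 < P)
    (q v : ℝ → ℝ)
    (hq : ∀ t, HasDerivAt q (v t) t)
    (hv : ∀ t, HasDerivAt v
      ((psat P (-(Kp * q t) - Kd * v t) (v t) - d * v t) / m) t) :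
    let V := fun t => (1 / 2) * m * (v t) ^ 2 + (1 / 2) * Kp * (q t) ^ 2
    (∀ s t, s ≤ t → V t ≤ V s) ∧
    (∀ t, ∃ dV : ℝ, HasDerivAt V dV t ∧ dV ≤ 0 ∧ (v t ≠ 0 → dV < 0)) :=
  scalar_plant_energy_decrease_general m d Kp Kd P hm hd hKd q v hq hv
end
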